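/- If U ≥ U0 and J ≥ J0, then the Hamiltonian H = Σ_{x=1}^{L−1} H_x is positive semi-definite: ⟨ψ, H ψ⟩ ≥ 0 for every ψ ∈ 𝓥. -/

import Mathlib

open scoped ComplexOrder

noncomputable section

/-- `w_x = sin(δ/2)` for odd `x`, `cos(δ/2)` for even `x`. -/
def wR (δ : ℝ) (x : ℕ) : ℝ := if Odd x then Real.sin (δ/2) else Real.cos (δ/2)

/-- On-site potential `μ_x = −(V/2)(1 − (−1)^x cos δ)`. -/
def muPot (Vv δ : ℝ) (x : ℕ) : ℝ := -(Vv/2) * (1 - (-1 : ℝ)^x * Real.cos δ)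

/-- Bond-charge coupling `X_x = (−1)^{x+1} X0` with `X0 = (V/2) sin δ cos δ`. -/
def Xpar (Vv δ : ℝ) (x : ℕ) : ℝ := (-1 : ℝ)^(x+1) * ((Vv/2) * Real.sin δ * Real.cos δ)

/-- The Pauli matrices `p^{(1)}, p^{(2)}, p^{(3)}`; spin indices are `Bool`
with `true = ↑` (first row/column) and `false = ↓`. -/
def pauli : Fin 3 → Bool → Bool → ℂ
  | 0, σ, τ => if σ ≠ τ then 1 else 0
  | 1, σ, τ => if σ = true ∧ τ = false then -Complex.I
               else if σ = false ∧ τ = true then Complex.I else 0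
  | 2, σ, τ => if σ = τ then (if σ = true then 1 else -1) else 0

variable {𝓥 : Type*} [NormedAddCommGroup 𝓥] [InnerProductSpace ℂ 𝓥]

/-- Number operator `n_{x,σ} = c_{x,σ}† c_{x,σ}`. -/
def nOp (c cdag : ℕ → Bool → Module.End ℂ 𝓥) (x : ℕ) (σ : Bool) : Module.End ℂ 𝓥 :=
  cdag x σ * c x σ

/-- Number operator `n_x = n_{x,↑} + n_{x,↓}`. -/
def ntot (c cdag : ℕ → Bool → Module.End ℂ 𝓥) (x : ℕ) : Module.End ℂ 𝓥 :=
  nOp c cdag x true + nOp c cdag x false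

/-- Spin operator `S_x^{(l)} = (1/2) Σ_{σ,τ} c_{x,σ}† p^{(l)}_{σ,τ} c_{x,τ}`. -/
def spinOp (c cdag : ℕ → Bool → Module.End ℂ 𝓥) (x : ℕ) (l : Fin 3) : Module.End ℂ 𝓥 :=
  (1/2 : ℂ) • ∑ σ : Bool, ∑ τ : Bool, pauli l σ τ • (cdag x σ * c x τ)

/-- Hopping term `H_{t,x}`. -/
def Ht (t Vv δ : ℝ) (c cdag : ℕ → Bool → Module.End ℂ 𝓥) (x : ℕ) : Module.End ℂ 𝓥 :=
  (-t : ℂ) • ∑ σ : Bool, (cdag x σ * c (x+1) σ + cdag (x+1) σ * c x σ)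
    - (muPot Vv δ x : ℂ) • ntot c cdag x - (muPot Vv δ (x+1) : ℂ) • ntot c cdag (x+1)

/-- On-site interaction `H_{U,x}`. -/
def HU (U : ℝ) (c cdag : ℕ → Bool → Module.End ℂ 𝓥) (x : ℕ) : Module.End ℂ 𝓥 :=
  (U : ℂ) • (nOp c cdag x true * nOp c cdag x false
    + nOp c cdag (x+1) true * nOp c cdag (x+1) false)

/-- Charge-charge interaction `H_{V,x} = −V n_x n_{x+1}`. -/
def HV (Vv : ℝ) (c cdag : ℕ → Bool → Module.End ℂ 𝓥) (x : ℕ) : Module.End ℂ 𝓥 :=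
  (-Vv : ℂ) • (ntot c cdag x * ntot c cdag (x+1))

/-- Spin-spin interaction `H_{J,x} = J(n_x n_{x+1}/4 − S_x · S_{x+1})`. -/
def HJ (J : ℝ) (c cdag : ℕ → Bool → Module.End ℂ 𝓥) (x : ℕ) : Module.End ℂ 𝓥 :=
  (J : ℂ) • ((1/4 : ℂ) • (ntot c cdag x * ntot c cdag (x+1))
    - ∑ l : Fin 3, spinOp c cdag x l * spinOp c cdag (x+1) l)

/-- Bond-charge interaction `H_{X,x}` with `X_x = (−1)^{x+1} X0`. -/
def HX (Vv δ : ℝ) (c cdag : ℕ → Bool → Module.End ℂ 𝓥) (x : ℕ) : Module.End ℂ 𝓥 :=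
  ∑ σ : Bool,
    ((Xpar Vv δ x : ℂ) • nOp c cdag x (!σ) + (Xpar Vv δ (x+1) : ℂ) • nOp c cdag (x+1) (!σ))
      * (cdag x σ * c (x+1) σ + cdag (x+1) σ * c x σ)

/-- The local Hamiltonian `H_x = H_{t,x} + H_{U,x} + H_{V,x} + H_{J,x} + H_{X,x}`. -/
def Hloc (t Vv δ U J : ℝ) (c cdag : ℕ → Bool → Module.End ℂ 𝓥) (x : ℕ) : Module.End ℂ 𝓥 :=
  Ht t Vv δ c cdag x + HU U c cdag x + HV Vv c cdag x + HJ J c cdag x + HX Vv δ c cdag x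

/-! On the bond `(x, x + 1)` put `w₁ = w_x`, `w₂ = w_{x+1}`, so that `w₁² + w₂² = 1`,
`sin δ = 2 w₁ w₂` and, by the choice of `δ`, `t = V w₁ w₂`; the potentials and bond-charge
couplings are then polynomials in `w₁, w₂`. After normal ordering of the four modes
`x↑, x↓, (x+1)↑, (x+1)↓`, the bond term `H_x` is a sum of fourteen terms `r • D⋆D` with `r ≥ 0`,
the coefficients of the last three being `U - V sin² δ` and `(J - V (2 - sin² δ)) / 2`. Each such
term has nonnegative expectation, hence so does `H = Σ H_x`.

The operators `c_{x,σ}` need not be bounded and `𝓥` need not be complete, so `D⋆` is taken in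
the ⋆-algebra of pairs `(A, A†)` of mutually adjoint operators. -/

open scoped InnerProductSpace

theorem wR_trig_identities (δ : ℝ) (x : ℕ) :
    wR δ x ^ 2 + wR δ (x + 1) ^ 2 = 1 ∧ 2 * wR δ x * wR δ (x + 1) = Real.sin δ ∧
      (-1) ^ x * Real.cos δ = wR δ x ^ 2 - wR δ (x + 1) ^ 2 := by
  have hδ : δ = 2 * (δ / 2) := by ring
  have hsin := Real.sin_two_mul (δ / 2)
  have hcos := Real.cos_two_mul' (δ / 2)
  have hpyth := Real.sin_sq_add_cos_sq (δ / 2)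
  rw [← hδ] at hsin hcos
  rcases Nat.even_or_odd x with hx | hx
  · simp only [wR, Nat.not_odd_iff_even.mpr hx, hx.add_one, if_true, if_false, hx.neg_one_pow]
    exact ⟨by linarith, by linarith, by linarith⟩
  · simp only [wR, hx, Nat.odd_add_one, not_true, if_true, if_false, hx.neg_one_pow]
    exact ⟨by linarith, by linarith, by linarith⟩

theorem muPot_eq (V δ : ℝ) (x : ℕ) : muPot V δ x = -(V * wR δ (x + 1) ^ 2) := by
  obtain ⟨hpyth, -, hcos⟩ := wR_trig_identities δ x
  rw [muPot]
  linear_combination (V / 2) * hcos + (V / 2) * hpyth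

theorem muPot_succ_eq (V δ : ℝ) (x : ℕ) : muPot V δ (x + 1) = -(V * wR δ x ^ 2) := by
  obtain ⟨hpyth, -, hcos⟩ := wR_trig_identities δ x
  rw [muPot, pow_succ]
  linear_combination (V / 2) * hpyth - (V / 2) * hcos

theorem Xpar_eq (V δ : ℝ) (x : ℕ) :
    Xpar V δ x = V * wR δ x * wR δ (x + 1) * (wR δ (x + 1) ^ 2 - wR δ x ^ 2) := by
  obtain ⟨-, hsin, hcos⟩ := wR_trig_identities δ x
  rw [Xpar, pow_succ, ← hsin]
  linear_combination (-V * wR δ x * wR δ (x + 1)) * hcos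

theorem Xpar_succ (V δ : ℝ) (x : ℕ) : Xpar V δ (x + 1) = -Xpar V δ x := by
  rw [Xpar, Xpar, pow_succ, mul_neg_one, neg_mul]

theorem mul_mul_of_mul_eq {M : Type*} [Semigroup M] {x y z : M} (h : x * y = z) (t : M) :
    x * (y * t) = z * t := by
  rw [← mul_assoc, h]

section CanonicalAnticommutation

variable {R : Type*} [Ring R] [StarRing R] {ι : Type*} [DecidableEq ι]

structure IsCAR (a : ι → R) : Prop where
  anticomm : ∀ i j, a i * a j + a j * a i = 0
  anticomm_star : ∀ i j, star (a i) * a j + a j * star (a i) = if i = j then 1 else 0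

namespace IsCAR

variable {a : ι → R} (h : IsCAR a)
include h

theorem mul_comm (i j : ι) : a j * a i = -(a i * a j) :=
  eq_neg_of_add_eq_zero_right (h.anticomm i j)

theorem mul_self [Algebra ℝ R] (i : ι) : a i * a i = 0 := by
  have h2 : (2 : ℝ) • (a i * a i) = 0 := by rw [two_smul]; exact h.anticomm i i
  simpa using h2

/- The rewrite rules of normal ordering: creators to the left of annihilators, both sorted by
mode. The order hypotheses only orient the rules for `simp`, and each rule has a variant that
applies inside a right-associated product. -/

theorem mul_self_mul [Algebra ℝ R] (i : ι) (t : R) : a i * (a i * t) = 0 := by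
  rw [mul_mul_of_mul_eq (h.mul_self i), zero_mul]

theorem star_mul_star_self_mul [Algebra ℝ R] (i : ι) (t : R) :
    star (a i) * (star (a i) * t) = 0 := by
  rw [mul_mul_of_mul_eq (by rw [← star_mul, h.mul_self, star_zero]), zero_mul]

theorem mul_of_lt [LinearOrder ι] {i j : ι} (_ : i < j) : a j * a i = -(a i * a j) :=
  h.mul_comm i j

theorem mul_mul_of_lt [LinearOrder ι] {i j : ι} (_ : i < j) (t : R) :
    a j * (a i * t) = -(a i * (a j * t)) := by
  rw [mul_mul_of_mul_eq (h.mul_comm i j), neg_mul, mul_assoc]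

theorem star_mul_star_of_lt [LinearOrder ι] {i j : ι} (_ : i < j) :
    star (a j) * star (a i) = -(star (a i) * star (a j)) := by
  rw [← star_mul, ← star_mul, h.mul_comm, star_neg]

theorem star_mul_star_mul_of_lt [LinearOrder ι] {i j : ι} (hij : i < j) (t : R) :
    star (a j) * (star (a i) * t) = -(star (a i) * (star (a j) * t)) := by
  rw [mul_mul_of_mul_eq (h.star_mul_star_of_lt hij), neg_mul, mul_assoc]

theorem mul_star_self_mul (i : ι) (t : R) :
    a i * (star (a i) * t) = t - star (a i) * (a i * t) := by
  have hii := h.anticomm_star i i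
  rw [if_pos rfl] at hii
  rw [mul_mul_of_mul_eq (eq_sub_of_add_eq' hii), sub_mul, one_mul, mul_assoc]

theorem mul_star_mul_of_ne {i j : ι} (hij : i ≠ j) (t : R) :
    a j * (star (a i) * t) = -(star (a i) * (a j * t)) := by
  have hij' := h.anticomm_star i j
  rw [if_neg hij] at hij'
  rw [mul_mul_of_mul_eq (eq_neg_of_add_eq_zero_right hij'), neg_mul, mul_assoc]

end IsCAR

end CanonicalAnticommutation

section BondHamiltonian

variable {R : Type*} [Ring R] [StarRing R] [Algebra ℝ R] {ι : Type*}

def numOp (a : ι → R) (i : ι) : R := star (a i) * a i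

def holeOp (a : ι → R) (i : ι) : R := 1 - numOp a i

def hopOp (a : ι → R) (i j : ι) : R := star (a i) * a j + star (a j) * a i

def smulStarMulSelf (r : ℝ) (d : R) : R := r • (star d * d)

/-- `H_x` in terms of the modes `0 = x↑`, `1 = x↓`, `2 = (x+1)↑`, `3 = (x+1)↓`, with the
parameters `t, μ_x, μ_{x+1}, U, V, J, X_x, X_{x+1}` and `S_x · S_{x+1}` written through
spin flips. -/
def bondHamiltonian (a : Fin 4 → R) (t μ₁ μ₂ U V J X₁ X₂ : ℝ) : R :=
  -t • (hopOp a 0 2 + hopOp a 1 3) - μ₁ • (numOp a 0 + numOp a 1) - μ₂ • (numOp a 2 + numOp a 3)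
  + U • (numOp a 0 * numOp a 1 + numOp a 2 * numOp a 3)
  - V • ((numOp a 0 + numOp a 1) * (numOp a 2 + numOp a 3))
  + J • ((1 / 4 : ℝ) • ((numOp a 0 + numOp a 1) * (numOp a 2 + numOp a 3))
      - ((1 / 2 : ℝ) •
          (star (a 0) * a 1 * (star (a 3) * a 2) + star (a 1) * a 0 * (star (a 2) * a 3))
        + (1 / 4 : ℝ) • ((numOp a 0 - numOp a 1) * (numOp a 2 - numOp a 3))))
  + (X₁ • numOp a 1 + X₂ • numOp a 3) * hopOp a 0 2
  + (X₁ • numOp a 0 + X₂ • numOp a 2) * hopOp a 1 3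

set_option maxHeartbeats 1000000 in
theorem bondHamiltonian_eq_sum_smulStarMulSelf [StarModule ℝ R] {a : Fin 4 → R} (h : IsCAR a)
    {U V J w₁ w₂ : ℝ} (hw : w₁ ^ 2 + w₂ ^ 2 = 1) :
    bondHamiltonian a (V * w₁ * w₂) (-(V * w₂ ^ 2)) (-(V * w₁ ^ 2)) U V J
      (V * w₁ * w₂ * (w₂ ^ 2 - w₁ ^ 2)) (-(V * w₁ * w₂ * (w₂ ^ 2 - w₁ ^ 2))) =
    smulStarMulSelf V (w₂ • (holeOp a 2 * holeOp a 3 * a 0) - w₁ • (holeOp a 0 * holeOp a 1 * a 2))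
    + smulStarMulSelf V
        (w₂ • (holeOp a 2 * holeOp a 3 * a 1) - w₁ • (holeOp a 0 * holeOp a 1 * a 3))
    + smulStarMulSelf V
        (w₂ ^ 2 • (holeOp a 1 * holeOp a 2 * (a 0 * a 3) - holeOp a 0 * holeOp a 3 * (a 1 * a 2))
          - (2 * w₁ * w₂) • (holeOp a 0 * holeOp a 1 * (a 2 * a 3)))
    + smulStarMulSelf V
        (w₁ ^ 2 • (holeOp a 1 * holeOp a 2 * (a 0 * a 3) - holeOp a 0 * holeOp a 3 * (a 1 * a 2))
          - (2 * w₁ * w₂) • (holeOp a 2 * holeOp a 3 * (a 0 * a 1)))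
    + smulStarMulSelf V
        (w₂ • (numOp a 1 * holeOp a 2 * (a 0 * a 3)) - w₁ • (numOp a 1 * holeOp a 0 * (a 2 * a 3)))
    + smulStarMulSelf V
        (w₁ • (numOp a 0 * holeOp a 1 * (a 2 * a 3)) + w₂ • (numOp a 0 * holeOp a 3 * (a 1 * a 2)))
    + smulStarMulSelf (2 * V * (w₁ * w₂) ^ 2) (numOp a 3 * holeOp a 0 * (a 1 * a 2))
    + smulStarMulSelf (2 * V * (w₁ * w₂) ^ 2) (numOp a 3 * holeOp a 2 * (a 0 * a 1))
    + smulStarMulSelf (2 * V * (w₁ * w₂) ^ 2) (numOp a 2 * holeOp a 1 * (a 0 * a 3))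
    + smulStarMulSelf (2 * V * (w₁ * w₂) ^ 2) (numOp a 2 * holeOp a 3 * (a 0 * a 1))
    + smulStarMulSelf (4 * V * (w₁ * w₂) ^ 2) (numOp a 2 * numOp a 3 * (a 0 * a 1))
    + smulStarMulSelf (U - 4 * V * (w₁ * w₂) ^ 2) (a 0 * a 1)
    + smulStarMulSelf (U - 4 * V * (w₁ * w₂) ^ 2) (a 2 * a 3)
    + smulStarMulSelf ((J - 2 * V + 4 * V * (w₁ * w₂) ^ 2) / 2) (a 0 * a 3 - a 1 * a 2) := by
  simp (disch := decide) only [bondHamiltonian, smulStarMulSelf, holeOp, numOp, hopOp,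
    star_sub, star_add, star_neg, star_smul, star_mul, star_star, star_trivial,
    mul_assoc, one_mul, mul_one, mul_zero, mul_neg, neg_mul, neg_neg, mul_sub, sub_mul, mul_add,
    add_mul, neg_zero, sub_zero, zero_sub, add_zero, zero_add, smul_mul_assoc, mul_smul_comm,
    smul_smul, smul_add, smul_sub, smul_neg, neg_smul, smul_zero,
    h.mul_self, h.mul_self_mul, h.star_mul_star_self_mul, h.mul_of_lt, h.mul_mul_of_lt,
    h.star_mul_star_of_lt, h.star_mul_star_mul_of_lt, h.mul_star_self_mul, h.mul_star_mul_of_ne]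
  -- the coefficients of the normal-ordered monomials agree modulo `w₁² + w₂² = 1`
  match_scalars <;> grind

theorem smulStarMulSelf_mem_closure [StarModule ℝ R] {r : ℝ} (hr : 0 ≤ r) (d : R) :
    smulStarMulSelf r d ∈ AddSubmonoid.closure (Set.range fun s : R => star s * s) := by
  refine AddSubmonoid.subset_closure ⟨Real.sqrt r • d, ?_⟩
  dsimp only
  rw [smulStarMulSelf, star_smul, star_trivial, smul_mul_smul_comm, Real.mul_self_sqrt hr]

theorem bondHamiltonian_mem_closure [StarModule ℝ R] {a : Fin 4 → R} (h : IsCAR a)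
    {U V J w₁ w₂ : ℝ} (hw : w₁ ^ 2 + w₂ ^ 2 = 1) (hV : 0 ≤ V) (hU : 4 * V * (w₁ * w₂) ^ 2 ≤ U)
    (hJ : 2 * V - 4 * V * (w₁ * w₂) ^ 2 ≤ J) :
    bondHamiltonian a (V * w₁ * w₂) (-(V * w₂ ^ 2)) (-(V * w₁ ^ 2)) U V J
      (V * w₁ * w₂ * (w₂ ^ 2 - w₁ ^ 2)) (-(V * w₁ * w₂ * (w₂ ^ 2 - w₁ ^ 2))) ∈
      AddSubmonoid.closure (Set.range fun s : R => star s * s) := by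
  rw [bondHamiltonian_eq_sum_smulStarMulSelf h hw]
  repeat' refine add_mem ?_ ?_
  all_goals exact smulStarMulSelf_mem_closure (by first | positivity | linarith) _

end BondHamiltonian

section AdjointPairs

variable (𝓥) in
/-- The second component lives in the opposite algebra so that the product matches
`(A A')† = A'† A†`; swapping the components is then a star operation. -/
def adjointPairs : Subalgebra ℝ (Module.End ℂ 𝓥 × (Module.End ℂ 𝓥)ᵐᵒᵖ) where
  carrier := {p | ∀ u v, ⟪p.1 u, v⟫_ℂ = ⟪u, p.2.unop v⟫_ℂ}
  mul_mem' {p q} hp hq u v := by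
    simp only [Set.mem_ofPred_eq, Prod.fst_mul, Prod.snd_mul, MulOpposite.unop_mul,
      Module.End.mul_apply] at *
    rw [hp, hq]
  add_mem' {p q} hp hq u v := by
    simp only [Set.mem_ofPred_eq, Prod.fst_add, Prod.snd_add, MulOpposite.unop_add,
      LinearMap.add_apply, inner_add_left, inner_add_right] at *
    rw [hp, hq]
  algebraMap_mem' r u v := by
    simp [Algebra.algebraMap_eq_smul_one]

namespace adjointPairs

instance : Star (adjointPairs 𝓥) where
  star p := ⟨(p.1.2.unop, MulOpposite.op p.1.1), fun u v => by
    rw [← inner_conj_symm, ← p.2 v u, inner_conj_symm]; rfl⟩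

instance : StarRing (adjointPairs 𝓥) where
  star_involutive _ := rfl
  star_mul _ _ := rfl
  star_add _ _ := rfl

instance : StarModule ℝ (adjointPairs 𝓥) where
  star_smul _ _ := rfl

def toEnd : adjointPairs 𝓥 →ₐ[ℝ] Module.End ℂ 𝓥 :=
  (AlgHom.fst ℝ _ _).comp (adjointPairs 𝓥).val

def ofAdjoint (A B : Module.End ℂ 𝓥) (h : ∀ u v, ⟪B u, v⟫_ℂ = ⟪u, A v⟫_ℂ) :
    adjointPairs 𝓥 :=
  star ⟨(B, MulOpposite.op A), h⟩

theorem isCAR_ofAdjoint {ι : Type*} [DecidableEq ι] {A B : ι → Module.End ℂ 𝓥}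
    (hadj : ∀ i u v, ⟪B i u, v⟫_ℂ = ⟪u, A i v⟫_ℂ) (hAA : ∀ i j, A i * A j + A j * A i = 0)
    (hBB : ∀ i j, B i * B j + B j * B i = 0)
    (hBA : ∀ i j, B i * A j + A j * B i = if i = j then 1 else 0) :
    IsCAR fun i => ofAdjoint (A i) (B i) (hadj i) where
  anticomm i j := Subtype.ext <| Prod.ext (hAA i j) (congrArg MulOpposite.op (hBB j i))
  anticomm_star i j := by
    refine Subtype.ext <|
      Prod.ext ((hBA i j).trans ?_) (congrArg MulOpposite.op ((hBA j i).trans ?_))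
    all_goals split_ifs <;> simp_all <;> rfl

theorem inner_toEnd_star_mul_self (s : adjointPairs 𝓥) (ψ : 𝓥) :
    ⟪ψ, toEnd (star s * s) ψ⟫_ℂ = (‖toEnd s ψ‖ : ℂ) ^ 2 :=
  (s.2 ψ _).symm.trans (inner_self_eq_norm_sq_to_K _)

theorem inner_toEnd_nonneg {x : adjointPairs 𝓥}
    (hx : x ∈ AddSubmonoid.closure (Set.range fun s : adjointPairs 𝓥 => star s * s)) (ψ : 𝓥) :
    0 ≤ ⟪ψ, toEnd x ψ⟫_ℂ := by
  induction hx using AddSubmonoid.closure_induction with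
  | mem _ hx =>
    obtain ⟨s, rfl⟩ := hx
    rw [inner_toEnd_star_mul_self, ← Complex.ofReal_pow]
    exact Complex.zero_le_real.mpr (sq_nonneg _)
  | zero => simp
  | add _ _ _ _ h₁ h₂ =>
    rw [map_add, LinearMap.add_apply, inner_add_right]
    exact add_nonneg h₁ h₂

end adjointPairs

end AdjointPairs

theorem sum_spinOp_mul_spinOp (c cdag : ℕ → Bool → Module.End ℂ 𝓥) (x y : ℕ) :
    ∑ l : Fin 3, spinOp c cdag x l * spinOp c cdag y l
      = (1 / 2 : ℂ) • (cdag x true * c x false * (cdag y false * c y true)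
          + cdag x false * c x true * (cdag y true * c y false))
        + (1 / 4 : ℂ) • ((cdag x true * c x true - cdag x false * c x false)
            * (cdag y true * c y true - cdag y false * c y false)) := by
  simp only [spinOp, pauli, Fin.sum_univ_three, Fintype.sum_bool, ne_eq, not_true_eq_false,
    if_false, if_true, Bool.true_eq_false, Bool.false_eq_true, not_false_eq_true, and_self,
    and_true, and_false, zero_smul, one_smul, add_zero, zero_add, mul_add, add_mul, mul_sub,
    sub_mul, smul_mul_assoc, mul_smul_comm]
  match_scalars <;> ring_nf <;> simp only [Complex.I_sq] <;> ring

def bondMode (x : ℕ) : Fin 4 → ℕ × Bool :=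
  ![(x, true), (x, false), (x + 1, true), (x + 1, false)]

theorem bondMode_fst_eq_or (x : ℕ) (i : Fin 4) :
    (bondMode x i).1 = x ∨ (bondMode x i).1 = x + 1 := by
  fin_cases i <;> simp [bondMode]

theorem bondMode_injective (x : ℕ) : Function.Injective (bondMode x) := by
  intro i j hij
  fin_cases i <;> fin_cases j <;> simp_all [bondMode]

theorem exists_isCAR_bondMode {c cdag : ℕ → Bool → Module.End ℂ 𝓥} {s : Finset ℕ} {x : ℕ}
    (hx : ∀ i, (bondMode x i).1 ∈ s)
    (hadj : ∀ y ∈ s, ∀ (σ : Bool) (ψ φ : 𝓥), ⟪cdag y σ ψ, φ⟫_ℂ = ⟪ψ, c y σ φ⟫_ℂ)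
    (car_cc : ∀ y ∈ s, ∀ z ∈ s, ∀ σ τ : Bool, c y σ * c z τ + c z τ * c y σ = 0)
    (car_dd : ∀ y ∈ s, ∀ z ∈ s, ∀ σ τ : Bool, cdag y σ * cdag z τ + cdag z τ * cdag y σ = 0)
    (car_dc : ∀ y ∈ s, ∀ z ∈ s, ∀ σ τ : Bool,
      cdag y σ * c z τ + c z τ * cdag y σ = if y = z ∧ σ = τ then 1 else 0) :
    ∃ a : Fin 4 → adjointPairs 𝓥, IsCAR a ∧
      (∀ i, adjointPairs.toEnd (a i) = Function.uncurry c (bondMode x i)) ∧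
      ∀ i, adjointPairs.toEnd (star (a i)) = Function.uncurry cdag (bondMode x i) :=
  ⟨_, adjointPairs.isCAR_ofAdjoint (fun i => hadj _ (hx i) _)
    (fun i j => car_cc _ (hx i) _ (hx j) _ _) (fun i j => car_dd _ (hx i) _ (hx j) _ _)
    fun i j => (car_dc _ (hx i) _ (hx j) _ _).trans <| by
      simp only [← Prod.ext_iff, (bondMode_injective x).eq_iff],
    fun _ => rfl, fun _ => rfl⟩

theorem Hloc_eq_map_bondHamiltonian {R : Type*} [Ring R] [StarRing R] [Algebra ℝ R]
    (φ : R →ₐ[ℝ] Module.End ℂ 𝓥) {a : Fin 4 → R} {c cdag : ℕ → Bool → Module.End ℂ 𝓥} {x : ℕ}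
    (ha : ∀ i, φ (a i) = Function.uncurry c (bondMode x i))
    (ha' : ∀ i, φ (star (a i)) = Function.uncurry cdag (bondMode x i)) (t V δ U J : ℝ) :
    Hloc t V δ U J c cdag x = φ (bondHamiltonian a t (muPot V δ x) (muPot V δ (x + 1)) U V J
      (Xpar V δ x) (Xpar V δ (x + 1))) := by
  simp only [bondHamiltonian, numOp, hopOp, map_add, map_sub, map_mul, map_smul, ha, ha',
    bondMode, Function.uncurry_apply_pair, Matrix.cons_val]
  simp only [Hloc, Ht, HU, HV, HJ, HX, ntot, nOp, sum_spinOp_mul_spinOp, Fintype.sum_bool,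
    Bool.not_true, Bool.not_false]
  module

theorem statement5_general (L : ℕ)
    (t Vv : ℝ) (ht : 0 < t) (htV : 2*t ≤ Vv)
    (δ : ℝ) (hδ : Real.sin δ = 2*t/Vv)
    (U J : ℝ) (hU : U ≥ Vv * Real.sin δ ^ 2) (hJ : J ≥ Vv * (2 - Real.sin δ ^ 2))
    (c cdag : ℕ → Bool → Module.End ℂ 𝓥)
    (hadj : ∀ x ∈ Finset.Icc 1 L, ∀ (σ : Bool) (ψ φ : 𝓥),
      (inner ℂ (cdag x σ ψ) φ : ℂ) = inner ℂ ψ (c x σ φ))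
    (car_cc : ∀ x ∈ Finset.Icc 1 L, ∀ y ∈ Finset.Icc 1 L, ∀ σ τ : Bool,
      c x σ * c y τ + c y τ * c x σ = 0)
    (car_dd : ∀ x ∈ Finset.Icc 1 L, ∀ y ∈ Finset.Icc 1 L, ∀ σ τ : Bool,
      cdag x σ * cdag y τ + cdag y τ * cdag x σ = 0)
    (car_dc : ∀ x ∈ Finset.Icc 1 L, ∀ y ∈ Finset.Icc 1 L, ∀ σ τ : Bool,
      cdag x σ * c y τ + c y τ * cdag x σ = if x = y ∧ σ = τ then 1 else 0) :
    ∀ ψ : 𝓥, 0 ≤ (inner ℂ ψ ((∑ x ∈ Finset.Icc 1 (L-1), Hloc t Vv δ U J c cdag x) ψ) : ℂ) := by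
  intro ψ
  rw [LinearMap.sum_apply, inner_sum]
  refine Finset.sum_nonneg fun x hx => ?_
  have hmode : ∀ i, (bondMode x i).1 ∈ Finset.Icc 1 L := by
    simp only [Finset.mem_Icc] at hx ⊢
    intro i; rcases bondMode_fst_eq_or x i with h | h <;> omega
  obtain ⟨a, ha, hc, hcdag⟩ := exists_isCAR_bondMode hmode hadj car_cc car_dd car_dc
  have hV : 0 < Vv := by linarith
  obtain ⟨hw, hsin, -⟩ := wR_trig_identities δ x
  have ht' : t = Vv * wR δ x * wR δ (x + 1) := by
    rw [← hsin, eq_div_iff hV.ne'] at hδ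
    linarith
  have hsin_sq : Vv * Real.sin δ ^ 2 = 4 * Vv * (wR δ x * wR δ (x + 1)) ^ 2 := by
    rw [← hsin]; ring
  rw [Hloc_eq_map_bondHamiltonian (R := adjointPairs 𝓥) adjointPairs.toEnd hc hcdag,
    muPot_succ_eq, muPot_eq, Xpar_succ, Xpar_eq, ht']
  exact adjointPairs.inner_toEnd_nonneg
    (bondHamiltonian_mem_closure ha hw hV.le (by linarith) (by linarith)) ψ

/-- if `U ≥ U0` and `J ≥ J0`, then `H = Σ_{x=1}^{L−1} H_x` is
positive semi-definite: `⟨ψ, H ψ⟩ ≥ 0` for every `ψ`. -/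
theorem statement5 (L : ℕ) (hL3 : 3 ≤ L) (hLodd : Odd L)
    (t Vv : ℝ) (ht : 0 < t) (htV : 2*t ≤ Vv)
    (δ : ℝ) (hδ0 : 0 < δ) (hδ1 : δ ≤ Real.pi / 2) (hδ : Real.sin δ = 2*t/Vv)
    (U J : ℝ) (hU : U ≥ Vv * Real.sin δ ^ 2) (hJ : J ≥ Vv * (2 - Real.sin δ ^ 2))
    (c cdag : ℕ → Bool → Module.End ℂ 𝓥)
    (hadj : ∀ x ∈ Finset.Icc 1 L, ∀ (σ : Bool) (ψ φ : 𝓥),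
      (inner ℂ (cdag x σ ψ) φ : ℂ) = inner ℂ ψ (c x σ φ))
    (car_cc : ∀ x ∈ Finset.Icc 1 L, ∀ y ∈ Finset.Icc 1 L, ∀ σ τ : Bool,
      c x σ * c y τ + c y τ * c x σ = 0)
    (car_dd : ∀ x ∈ Finset.Icc 1 L, ∀ y ∈ Finset.Icc 1 L, ∀ σ τ : Bool,
      cdag x σ * cdag y τ + cdag y τ * cdag x σ = 0)
    (car_dc : ∀ x ∈ Finset.Icc 1 L, ∀ y ∈ Finset.Icc 1 L, ∀ σ τ : Bool,
      cdag x σ * c y τ + c y τ * cdag x σ = if x = y ∧ σ = τ then 1 else 0) :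
    ∀ ψ : 𝓥, 0 ≤ (inner ℂ ψ ((∑ x ∈ Finset.Icc 1 (L-1), Hloc t Vv δ U J c cdag x) ψ) : ℂ) :=
  statement5_general L t Vv ht htV δ hδ U J hU hJ c cdag hadj car_cc car_dd car_dc

end
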